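/- arXiv:0709.1525 — 2 statements merged into one kernel-verified Lean document; each statement's English description precedes it below -/
import Mathlib

section
/- Let V be an infinite-dimensional vector space over a field k of characteristic zero with a nondegenerate symmetric bilinear form Q, regarded as a module over so(V,Q). Then the so(V,Q)-submodule Γ = ker(Q̂ : Sym²V → k), where Q̂ is the map induced by Q on the symmetric square, does not admit an so(V,Q)-invariant complement in Sym²V; equivalently, the space of so(V,Q)-invariant vectors in Sym²V is zero. -/
open scoped TensorProduct

lemma aux_tensor_zero {k V : Type*} [Field k] [AddCommGroup V] [Module k V]
    (Q : V →ₗ[k] V →ₗ[k] k) (hnd' : ∀ u : V, (∀ v : V, Q v u = 0) → u = 0)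
    (t : V ⊗[k] V)
    (h : ∀ a b : V, TensorProduct.lift ((Q a).smulRight (Q b)) t = 0) : t = 0 := by
  classical
  set r : V → (V ⊗[k] V →ₗ[k] V) := fun a =>
    (TensorProduct.rid k V).toLinearMap ∘ₗ LinearMap.lTensor V (Q a) with hr_def
  have hr : ∀ a, r a t = 0 := by
    intro a
    apply hnd'
    intro b
    have hc : (Q b) ∘ₗ r a = TensorProduct.lift ((Q b).smulRight (Q a)) := by
      apply TensorProduct.ext'
      intro x y
      simp [hr_def, mul_comm]
    have := LinearMap.congr_fun hc t
    simpa [h b a] using this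
  let b := Module.Basis.ofVectorSpace k V
  let ι := Module.Basis.ofVectorSpaceIndex k V
  let E : V ⊗[k] V ≃ₗ[k] (ι →₀ V) :=
    (TensorProduct.congr b.repr (LinearEquiv.refl k V)).trans
      (TensorProduct.finsuppScalarLeft k V ι)
  have key : ∀ (a : V) (i : ι),
      (Q a) ∘ₗ ((Finsupp.lapply i : (ι →₀ V) →ₗ[k] V) ∘ₗ E.toLinearMap) =
      (Finsupp.lapply i : (ι →₀ k) →ₗ[k] k) ∘ₗ (b.repr.toLinearMap ∘ₗ r a) := by
    intro a i
    apply TensorProduct.ext'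
    intro x y
    simp [E, hr_def, TensorProduct.finsuppScalarLeft_apply_tmul_apply, mul_comm]
  have hEzero : E t = 0 := by
    ext i
    have : (E t) i = 0 := by
      apply hnd'
      intro a
      have := LinearMap.congr_fun (key a i) t
      simpa [hr a] using this
    simpa using this
  have := congrArg E.symm hEzero
  simpa using this

/-- For infinite-dimensional `V` with nondegenerate symmetric form `Q`, the
space of `so(V,Q)`-invariant vectors in `Sym²V` (realized in characteristic
zero as the symmetric tensors in `V ⊗ V`) is zero; equivalently, the submodule
`ker (Q̂)` admits no `so(V,Q)`-invariant complement in `Sym²V`. -/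
theorem stmt_13 (k V : Type*) [Field k] [CharZero k]
    [AddCommGroup V] [Module k V]
    (hV : ¬ Module.Finite k V)
    (Q : V →ₗ[k] V →ₗ[k] k)
    (hsymm : ∀ u v : V, Q u v = Q v u)
    (hnd : ∀ u : V, (∀ v : V, Q u v = 0) → u = 0) :
    ∀ s : V ⊗[k] V,
      TensorProduct.comm k V V s = s →
      (∀ X : Module.End k V, (∀ u v : V, Q (X u) v + Q u (X v) = 0) →
        (TensorProduct.map (X : V →ₗ[k] V) (LinearMap.id : V →ₗ[k] V) + TensorProduct.map (LinearMap.id : V →ₗ[k] V) (X : V →ₗ[k] V)) s = 0) →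
      s = 0 := by
  intro s hs hinv
  classical
  have hnd' : ∀ u : V, (∀ v : V, Q v u = 0) → u = 0 := fun u h =>
    hnd u fun v => (hsymm u v).trans (h v)
  set F : V → V → k := fun a b => TensorProduct.lift ((Q a).smulRight (Q b)) s with hFdef
  -- invariance of the bilinear form F under skew operators
  have hswap : ∀ X : Module.End k V, (∀ u v : V, Q (X u) v + Q u (X v) = 0) →
      ∀ a b : V, F (X a) b + F a (X b) = 0 := by
    intro X hX a b
    have hcomp : (TensorProduct.lift ((Q a).smulRight (Q b))) ∘ₗ
        (TensorProduct.map (X : V →ₗ[k] V) LinearMap.id +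
          TensorProduct.map LinearMap.id (X : V →ₗ[k] V)) =
        -(TensorProduct.lift ((Q (X a)).smulRight (Q b)) +
          TensorProduct.lift ((Q a).smulRight (Q (X b)))) := by
      apply TensorProduct.ext'
      intro x y
      have h1 : Q a (X x) = -Q (X a) x := by linear_combination hX a x
      have h2 : Q b (X y) = -Q (X b) y := by linear_combination hX b y
      simp only [LinearMap.coe_comp, Function.comp_apply, LinearMap.add_apply,
        TensorProduct.map_tmul, LinearMap.id_coe, id_eq, map_add,
        TensorProduct.lift.tmul, LinearMap.smulRight_apply, LinearMap.smul_apply,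
        smul_eq_mul, LinearMap.neg_apply]
      rw [h1]
      rw [show Q b ((X : V →ₗ[k] V) y) = -Q (X b) y from h2]
      ring
    have h0 := LinearMap.congr_fun hcomp s
    rw [LinearMap.comp_apply, hinv X hX, map_zero] at h0
    have := h0.symm
    simp only [LinearMap.neg_apply, LinearMap.add_apply, neg_eq_zero] at this
    exact this
  -- linearity of F in each argument
  have hlin1 : ∀ (r₁ r₂ : k) (x y c : V),
      F (r₁ • x + r₂ • y) c = r₁ * F x c + r₂ * F y c := by
    intro r₁ r₂ x y c
    have hc : TensorProduct.lift ((Q (r₁ • x + r₂ • y)).smulRight (Q c)) =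
        r₁ • TensorProduct.lift ((Q x).smulRight (Q c)) +
        r₂ • TensorProduct.lift ((Q y).smulRight (Q c)) := by
      apply TensorProduct.ext'
      intro u v
      simp only [TensorProduct.lift.tmul, LinearMap.smulRight_apply, LinearMap.smul_apply,
        smul_eq_mul, LinearMap.add_apply, map_add, map_smul]
      ring
    have := LinearMap.congr_fun hc s
    simpa [hFdef, smul_eq_mul] using this
  have hlin2 : ∀ (r₁ r₂ : k) (x y c : V),
      F c (r₁ • x + r₂ • y) = r₁ * F c x + r₂ * F c y := by
    intro r₁ r₂ x y c
    have hc : TensorProduct.lift ((Q c).smulRight (Q (r₁ • x + r₂ • y))) =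
        r₁ • TensorProduct.lift ((Q c).smulRight (Q x)) +
        r₂ • TensorProduct.lift ((Q c).smulRight (Q y)) := by
      apply TensorProduct.ext'
      intro u v
      simp only [TensorProduct.lift.tmul, LinearMap.smulRight_apply, LinearMap.smul_apply,
        smul_eq_mul, LinearMap.add_apply, map_add, map_smul]
      ring
    have := LinearMap.congr_fun hc s
    simpa [hFdef, smul_eq_mul] using this
  -- symmetry of F
  have hFsymm : ∀ a c : V, F a c = F c a := by
    intro a c
    have hc : (TensorProduct.lift ((Q a).smulRight (Q c))) ∘ₗ
        (TensorProduct.comm k V V).toLinearMap =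
        TensorProduct.lift ((Q c).smulRight (Q a)) := by
      apply TensorProduct.ext'
      intro x y
      simp [mul_comm]
    have := LinearMap.congr_fun hc s
    simp only [LinearMap.comp_apply, LinearEquiv.coe_coe, hs] at this
    simpa only [hFdef] using this
  -- the elementary skew operators
  set Xcd : V → V → Module.End k V := fun c d =>
    (Q c).smulRight d - (Q d).smulRight c with hXcd_def
  have hXapp : ∀ c d u : V, (Xcd c d) u = Q c u • d + (-(Q d u)) • c := by
    intro c d u
    simp [hXcd_def, sub_eq_add_neg]
  have hXskew : ∀ c d u v : V, Q ((Xcd c d) u) v + Q u ((Xcd c d) v) = 0 := by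
    intro c d u v
    rw [hXapp, hXapp]
    simp only [map_add, map_smul, LinearMap.add_apply, LinearMap.smul_apply, smul_eq_mul]
    rw [hsymm u d, hsymm u c]
    ring
  -- the key quadratic identity
  have key : ∀ c d a e : V,
      Q c a * F d e + (-(Q d a)) * F c e + (Q c e * F a d + (-(Q d e)) * F a c) = 0 := by
    intro c d a e
    have h := hswap (Xcd c d) (hXskew c d) a e
    rw [hXapp, hXapp, hlin1, hlin2] at h
    linear_combination h
  -- an anisotropic vector exists
  have hex : ∃ a : V, Q a a ≠ 0 := by
    by_contra hcon
    push_neg at hcon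
    have hz : ∀ u v : V, Q u v = 0 := by
      intro u v
      have h1 := hcon (u + v)
      simp only [map_add, LinearMap.add_apply, hcon u, hcon v] at h1
      rw [hsymm v u] at h1
      have h2 : (2 : k) * Q u v = 0 := by linear_combination h1
      exact (mul_eq_zero.mp h2).resolve_left two_ne_zero
    have hall : ∀ u : V, u = 0 := fun u => hnd u (hz u)
    exact hV (Module.Finite.of_surjective (0 : (Fin 1 → k) →ₗ[k] V)
      (fun v => ⟨0, by simp [hall v]⟩))
  obtain ⟨a₀, ha₀⟩ := hex
  -- F(·, a₀) is proportional to Q(·, a₀)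
  have ha1 : ∀ d : V, Q a₀ a₀ * F d a₀ = Q d a₀ * F a₀ a₀ := by
    intro d
    have h := key a₀ d a₀ a₀
    rw [hFsymm a₀ d] at h
    have h2 : (2 : k) * (Q a₀ a₀ * F d a₀ - Q d a₀ * F a₀ a₀) = 0 := by linear_combination h
    have h3 := (mul_eq_zero.mp h2).resolve_left two_ne_zero
    linear_combination h3
  -- F is proportional to Q
  have hFQ : ∀ d e : V, Q a₀ a₀ * (Q a₀ a₀ * F d e) = Q a₀ a₀ * (F a₀ a₀ * Q d e) := by
    intro d e
    have h := key a₀ d a₀ e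
    rw [hFsymm a₀ e, hFsymm a₀ d, hsymm a₀ e] at h
    linear_combination (Q a₀ a₀) * h + Q d a₀ * ha1 e - Q e a₀ * ha1 d
  by_cases hmu : F a₀ a₀ = 0
  · -- F vanishes identically, hence s = 0
    have hF0 : ∀ a e : V, F a e = 0 := by
      intro a e
      have h := hFQ a e
      rw [hmu] at h
      simp only [zero_mul, mul_zero] at h
      rcases mul_eq_zero.mp h with h' | h'
      · exact absurd h' ha₀
      · exact (mul_eq_zero.mp h').resolve_left ha₀
    exact aux_tensor_zero Q hnd' s hF0
  · -- Q has finite rank: contradiction with infinite-dimensionality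
    exfalso
    obtain ⟨S, hS⟩ := TensorProduct.exists_finset s
    have hFsum : ∀ d e : V, F d e = ∑ p ∈ S, Q d p.1 * Q e p.2 := by
      intro d e
      have : F d e = TensorProduct.lift ((Q d).smulRight (Q e)) s := rfl
      rw [this, hS, map_sum]
      simp [TensorProduct.lift.tmul]
    set Φ : V →ₗ[k] (S → k) := LinearMap.pi (fun p => Q (p : V × V).2) with hΦdef
    have hΦinj : Function.Injective Φ := by
      rw [← LinearMap.ker_eq_bot, LinearMap.ker_eq_bot']
      intro x hx
      have hxi : ∀ p : V × V, p ∈ S → Q p.2 x = 0 := by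
        intro p hp
        have := congrFun hx ⟨p, hp⟩
        simpa [hΦdef] using this
      apply hnd'
      intro d
      have hFdx : F d x = 0 := by
        rw [hFsum]
        apply Finset.sum_eq_zero
        intro p hp
        rw [hsymm x p.2, hxi p hp, mul_zero]
      have h := hFQ d x
      rw [hFdx, mul_zero, mul_zero] at h
      have h2 := (mul_eq_zero.mp h.symm).resolve_left ha₀
      have h3 := (mul_eq_zero.mp h2).resolve_left hmu
      exact h3
    exact hV (FiniteDimensional.of_injective Φ hΦinj)
end

section
/- Let V be an infinite-dimensional vector space over a field k of characteristic zero with a nondegenerate alternating bilinear form Ω. Then the space of sp(V,Ω)-invariant vectors in the exterior square Λ²V is zero; consequently the exact sequence of sp(V,Ω)-modules 0 → ker(Ω̂) → Λ²V → k → 0 does not split. -/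
open scoped TensorProduct

private lemma key_lemma {k V : Type*} [Field k] [AddCommGroup V] [Module k V]
    (Ω : V →ₗ[k] V →ₗ[k] k)
    (hsep : ∀ u : V, u ≠ 0 → ∃ b : V, Ω b u ≠ 0) :
    ∀ (S : Finset (V × V)) (u w : V × V → V),
      (∀ b : V, ∑ p ∈ S, Ω b (u p) • w p = 0) →
      ∑ p ∈ S, u p ⊗ₜ[k] w p = (0 : V ⊗[k] V) := by
  classical
  intro S
  induction S using Finset.strongInduction with
  | _ S ih =>
    intro u w h
    by_cases hz : ∀ p ∈ S, u p = 0
    · exact Finset.sum_eq_zero fun p hp => by rw [hz p hp, TensorProduct.zero_tmul]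
    · push_neg at hz
      obtain ⟨p0, hp0S, hp0⟩ := hz
      obtain ⟨b, hb⟩ := hsep _ hp0
      set c : k := Ω b (u p0) with hc
      have hS : ∀ b' : V, ∑ p ∈ S.erase p0, Ω b' (u p) • w p = -(Ω b' (u p0) • w p0) := by
        intro b'
        have h' := h b'
        rw [← Finset.add_sum_erase _ _ hp0S] at h'
        exact eq_neg_of_add_eq_zero_right h'
      set u' : V × V → V := fun p => u p - (c⁻¹ * Ω b (u p)) • u p0 with hu'
      have hrec : ∀ b' : V, ∑ p ∈ S.erase p0, Ω b' (u' p) • w p = 0 := by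
        intro b'
        have step : ∀ p, Ω b' (u' p) • w p
            = Ω b' (u p) • w p - (c⁻¹ * Ω b' (u p0)) • (Ω b (u p) • w p) := by
          intro p
          rw [hu']
          simp only [map_sub, map_smul, smul_eq_mul, sub_smul, smul_smul]
          ring_nf
        rw [Finset.sum_congr rfl (fun p _ => step p), Finset.sum_sub_distrib,
          ← Finset.smul_sum, hS b', hS b, ← hc, smul_neg, smul_smul]
        have hcc : c⁻¹ * Ω b' (u p0) * c = Ω b' (u p0) := by
          field_simp
        rw [hcc, sub_neg_eq_add, neg_add_cancel]
      have h0 := ih (S.erase p0) (Finset.erase_ssubset hp0S) u' w hrec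
      have hdiff : ∀ p, u p ⊗ₜ[k] w p
          = u' p ⊗ₜ[k] w p + u p0 ⊗ₜ[k] ((c⁻¹ * Ω b (u p)) • w p) := by
        intro p
        rw [hu']
        simp only [TensorProduct.sub_tmul, TensorProduct.tmul_smul]
        rw [TensorProduct.smul_tmul']
        abel
      have herase : ∑ p ∈ S.erase p0, u p ⊗ₜ[k] w p = u p0 ⊗ₜ[k] (-(w p0)) := by
        rw [Finset.sum_congr rfl (fun p _ => hdiff p), Finset.sum_add_distrib, h0, zero_add,
          ← TensorProduct.tmul_sum]
        congr 1
        have hsm : ∑ p ∈ S.erase p0, (c⁻¹ * Ω b (u p)) • w p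
            = c⁻¹ • ∑ p ∈ S.erase p0, Ω b (u p) • w p := by
          rw [Finset.smul_sum]
          exact Finset.sum_congr rfl fun p _ => by rw [smul_smul]
        rw [hsm, hS b, ← hc, smul_neg, smul_smul, inv_mul_cancel₀ hb, one_smul]
      rw [← Finset.add_sum_erase _ _ hp0S, herase, ← TensorProduct.tmul_add,
        add_neg_cancel, TensorProduct.tmul_zero]

/-- For infinite-dimensional `V` with nondegenerate alternating form `Ω`, the
space of `sp(V,Ω)`-invariant vectors in `Λ²V` (realized in characteristic zero
as the antisymmetric tensors in `V ⊗ V`) is zero; consequently the exact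
sequence `0 → ker Ω̂ → Λ²V → k → 0` does not split, i.e. there is no
invariant antisymmetric tensor mapping to `1` under `Ω̂`. -/
theorem stmt_14 (k V : Type*) [Field k] [CharZero k]
    [AddCommGroup V] [Module k V]
    (hV : ¬ Module.Finite k V)
    (Ω : V →ₗ[k] V →ₗ[k] k)
    (halt : ∀ v : V, Ω v v = 0)
    (hnd : ∀ u : V, (∀ v : V, Ω u v = 0) → u = 0) :
    (∀ s : V ⊗[k] V,
      TensorProduct.comm k V V s = -s →
      (∀ X : Module.End k V, (∀ u v : V, Ω (X u) v + Ω u (X v) = 0) →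
        (TensorProduct.map (X : V →ₗ[k] V) (LinearMap.id : V →ₗ[k] V) + TensorProduct.map (LinearMap.id : V →ₗ[k] V) (X : V →ₗ[k] V)) s = 0) →
      s = 0) ∧
    ¬ ∃ s : V ⊗[k] V,
        TensorProduct.comm k V V s = -s ∧
        (∀ X : Module.End k V, (∀ u v : V, Ω (X u) v + Ω u (X v) = 0) →
          (TensorProduct.map (X : V →ₗ[k] V) (LinearMap.id : V →ₗ[k] V) + TensorProduct.map (LinearMap.id : V →ₗ[k] V) (X : V →ₗ[k] V)) s = 0) ∧
        TensorProduct.lift Ω s = 1 := by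
  have hskew : ∀ a b : V, Ω a b = -Ω b a := by
    intro a b
    have h := halt (a + b)
    simp only [map_add, LinearMap.add_apply, halt a, halt b] at h
    linear_combination h
  have hsep : ∀ u : V, u ≠ 0 → ∃ v : V, Ω v u ≠ 0 := by
    intro u hu
    by_contra hcon
    push_neg at hcon
    exact hu (hnd u fun v => by rw [hskew, hcon v, neg_zero])
  have main : ∀ s : V ⊗[k] V,
      (∀ X : Module.End k V, (∀ u v : V, Ω (X u) v + Ω u (X v) = 0) →
        (TensorProduct.map (X : V →ₗ[k] V) (LinearMap.id : V →ₗ[k] V) + TensorProduct.map (LinearMap.id : V →ₗ[k] V) (X : V →ₗ[k] V)) s = 0) →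
      s = 0 := by
    intro s hinv
    obtain ⟨S, rfl⟩ := TensorProduct.exists_finset s
    -- the finite-dimensional subspace spanned by all components
    set W : Submodule k V :=
      Submodule.span k ((fun p : V × V => p.1) '' (S : Set (V × V)) ∪
        (fun p : V × V => p.2) '' (S : Set (V × V))) with hW
    have hWfd : FiniteDimensional k W := by
      apply FiniteDimensional.span_of_finite
      exact ((S.finite_toSet.image _).union (S.finite_toSet.image _))
    -- the "perpendicular" space of the components, of finite codimension
    set φ : V →ₗ[k] (S → k × k) :=
      LinearMap.pi (fun p : S => ((Ω.flip (p : V × V).1).prod (Ω.flip (p : V × V).2))) with hφ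
    set K : Submodule k V := LinearMap.ker φ with hK
    have hKmem : ∀ v : V, v ∈ K ↔ ∀ p ∈ S, Ω v p.1 = 0 ∧ Ω v p.2 = 0 := by
      intro v
      constructor
      · intro hv p hp
        have := congrFun (hv : φ v = 0) ⟨p, hp⟩
        simpa [hφ, Prod.ext_iff] using this
      · intro hv
        show φ v = 0
        funext p
        have := hv (p : V × V) p.2
        simp [hφ, Prod.ext_iff, this.1, this.2]
    -- choose c in K but not in W
    obtain ⟨c, hcK, hcW⟩ : ∃ c : V, c ∈ K ∧ c ∉ W := by
      by_contra hcon
      push_neg at hcon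
      have hKW : K ≤ W := fun x hx => hcon x hx
      have hKfd : FiniteDimensional k K := Submodule.finiteDimensional_of_le hKW
      have hQfd : FiniteDimensional k (V ⧸ K) := by
        have e := (LinearMap.quotKerEquivRange φ)
        rw [← hK] at e
        exact Module.Finite.equiv e.symm
      obtain ⟨P, hP⟩ := Submodule.exists_isCompl K
      have hPfd : FiniteDimensional k P :=
        Module.Finite.equiv (Submodule.quotientEquivOfIsCompl K P hP)
      have : Module.Finite k V :=
        Module.Finite.equiv (Submodule.prodEquivOfIsCompl K P hP)
      exact hV this
    have hc := (hKmem c).mp hcK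
    -- a functional vanishing on W with value 1 at c
    obtain ⟨f, hfc, hfW⟩ := Submodule.exists_dual_map_eq_bot_of_notMem hcW inferInstance
    set g : Module.Dual k V := (f c)⁻¹ • f with hg
    have hgc : g c = 1 := by
      simp [hg, inv_mul_cancel₀ hfc]
    have hgW : ∀ x ∈ W, g x = 0 := by
      intro x hx
      have : f x ∈ W.map f := ⟨x, hx, rfl⟩
      rw [hfW] at this
      simp only [Submodule.mem_bot] at this
      simp [hg, this]
    have hg1 : ∀ p ∈ S, g p.1 = 0 := by
      intro p hp
      exact hgW _ (Submodule.subset_span (Or.inl ⟨p, hp, rfl⟩))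
    -- the invariance relation, contracted with g in the first slot
    have hrel : ∀ b : V, ∑ p ∈ S, Ω b p.1 • p.2 = 0 := by
      intro b
      set X : Module.End k V := LinearMap.smulRight (Ω c) b + LinearMap.smulRight (Ω b) c
        with hX
      have hXsp : ∀ u v : V, Ω (X u) v + Ω u (X v) = 0 := by
        intro u v
        simp only [hX, LinearMap.add_apply, LinearMap.smulRight_apply, map_add, map_smul,
          smul_eq_mul, LinearMap.smul_apply]
        rw [hskew u b, hskew u c]
        ring
      have hinv' := hinv X hXsp
      set L : V ⊗[k] V →ₗ[k] V := TensorProduct.lift ((LinearMap.lsmul k V).comp g) with hL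
      have hL0 := congrArg L hinv'
      rw [map_zero] at hL0
      rw [LinearMap.add_apply, map_sum, map_sum, map_add, map_sum, map_sum] at hL0
      have e1 : ∀ p ∈ S, L (TensorProduct.map (X : V →ₗ[k] V) (LinearMap.id : V →ₗ[k] V)
          (p.1 ⊗ₜ[k] p.2)) = Ω b p.1 • p.2 := by
        intro p hp
        rw [TensorProduct.map_tmul]
        simp only [LinearMap.id_coe, id_eq, hL, TensorProduct.lift.tmul, LinearMap.coe_comp,
          Function.comp_apply, LinearMap.lsmul_apply]
        have : g (X p.1) = Ω b p.1 := by
          simp only [hX, LinearMap.add_apply, LinearMap.smulRight_apply, map_add, map_smul,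
            smul_eq_mul]
          rw [(hc p hp).1, hgc]
          ring
        rw [this]
      have e2 : ∀ p ∈ S, L (TensorProduct.map (LinearMap.id : V →ₗ[k] V) (X : V →ₗ[k] V)
          (p.1 ⊗ₜ[k] p.2)) = 0 := by
        intro p hp
        rw [TensorProduct.map_tmul]
        simp only [LinearMap.id_coe, id_eq, hL, TensorProduct.lift.tmul, LinearMap.coe_comp,
          Function.comp_apply, LinearMap.lsmul_apply]
        rw [hg1 p hp, zero_smul]
      rw [Finset.sum_congr rfl e1, Finset.sum_congr rfl e2, Finset.sum_const_zero,
        add_zero] at hL0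
      exact hL0
    exact key_lemma Ω hsep S (fun p => p.1) (fun p => p.2) hrel
  constructor
  · intro s _ hinv
    exact main s hinv
  · rintro ⟨s, _, hinv, hone⟩
    rw [main s hinv] at hone
    rw [map_zero] at hone
    exact one_ne_zero hone.symm
end
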